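/- arXiv:1711.01882 — 7 statements merged into one kernel-verified Lean document; each statement's English description precedes it below -/
import Mathlib

section
/- Let m ≥ 2 and let (x_0, …, x_m) ∈ ℤ^{m+1} be a nonzero tuple satisfying x_i x_{i+2} = x_{i+1}² for all 0 ≤ i ≤ m−2. If (t,u,v) and (t',u',v') are two triples of integers with gcd(u,v) = gcd(u',v') = 1 and x_i = t v^i u^{m−i} = t' v'^i u'^{m−i} for all 0 ≤ i ≤ m, then (t',u',v') = (t,u,v) or (t',u',v') = ((−1)^m t, −u, −v). In particular there are exactly two such representations: when m is even only the sign of the pair (u,v) can be changed, and when m is odd the signs of (u,v) and of t must be changed simultaneously. -/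
private lemma sign_solve (m : ℕ) (t t' : ℤ) (key : t' * (-1:ℤ) ^ m = t) :
    t' = (-1) ^ m * t := by
  rcases Nat.even_or_odd m with he | ho
  · simp [he.neg_one_pow] at key ⊢; linarith
  · simp [ho.neg_one_pow] at key ⊢; linarith

/-- Uniqueness, up to sign, of the parametrization `x_i = t v^i u^{m-i}`
(`gcd(u,v) = 1`) of a nonzero integer tuple satisfying `x_i x_{i+2} = x_{i+1}²`:
two such representations `(t,u,v)` and `(t',u',v')` satisfy `(t',u',v') = (t,u,v)` or
`(t',u',v') = ((-1)^m t, -u, -v)`. -/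
theorem stmt2 (m : ℕ) (hm : 2 ≤ m) (x : ℕ → ℤ)
    (hx : ∃ i ≤ m, x i ≠ 0)
    (h : ∀ i, i + 2 ≤ m → x i * x (i + 2) = (x (i + 1)) ^ 2)
    (t u v t' u' v' : ℤ)
    (huv : Int.gcd u v = 1) (huv' : Int.gcd u' v' = 1)
    (h1 : ∀ i ≤ m, x i = t * v ^ i * u ^ (m - i))
    (h2 : ∀ i ≤ m, x i = t' * v' ^ i * u' ^ (m - i)) :
    (t' = t ∧ u' = u ∧ v' = v) ∨ (t' = (-1) ^ m * t ∧ u' = -u ∧ v' = -v) := by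
  obtain ⟨j, hj, hxj⟩ := hx
  have h0 : (0:ℕ) ≤ m := Nat.zero_le m
  have h1m : (1:ℕ) ≤ m := by omega
  have hmm : m ≤ m := le_refl m
  have hm1m : m - 1 ≤ m := by omega
  by_cases hu : u = 0
  · -- u = 0, v = ±1
    have hv : v = 1 ∨ v = -1 := by
      have : v.natAbs = 1 := by simpa [hu, Int.gcd] using huv
      rcases Int.natAbs_eq v with h' | h' <;> omega
    have hxmne : x m ≠ 0 := by
      have hjm : j = m := by
        by_contra hne
        apply hxj
        rw [h1 j hj, hu, zero_pow (by omega : m - j ≠ 0)]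
        ring
      rwa [hjm] at hxj
    have hxm1 : x m = t * v ^ m := by simpa using h1 m hmm
    have hxm2 : x m = t' * v' ^ m := by simpa using h2 m hmm
    have ht' : t' ≠ 0 := by
      intro h0'; apply hxmne; rw [hxm2, h0']; ring
    have hv'0 : v' ≠ 0 := by
      intro h0'; apply hxmne; rw [hxm2, h0', zero_pow (by omega : m ≠ 0)]; ring
    have hxm1' : x (m - 1) = 0 := by
      rw [h1 _ hm1m, hu, (by omega : m - (m - 1) = 1)]; ring
    have hu' : u' = 0 := by
      have heq := h2 (m - 1) hm1m
      rw [hxm1', (by omega : m - (m - 1) = 1)] at heq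
      rcases mul_eq_zero.mp heq.symm with h' | h'
      · rcases mul_eq_zero.mp h' with h'' | h''
        · exact absurd h'' ht'
        · exact absurd (pow_eq_zero_iff (by omega : m - 1 ≠ 0) |>.mp h'') hv'0
      · simpa using h'
    have hv'1 : v' = 1 ∨ v' = -1 := by
      have : v'.natAbs = 1 := by simpa [hu', Int.gcd] using huv'
      rcases Int.natAbs_eq v' with h' | h' <;> omega
    have key : t' * v' ^ m = t * v ^ m := by rw [← hxm1, ← hxm2]
    rcases hv with rfl | rfl <;> rcases hv'1 with rfl | rfl
    · exact Or.inl ⟨by simpa using key, by rw [hu, hu'], rfl⟩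
    · refine Or.inr ⟨?_, by rw [hu, hu']; ring, rfl⟩
      exact sign_solve m t t' (by simpa using key)
    · refine Or.inr ⟨?_, by rw [hu, hu']; ring, by norm_num⟩
      refine sign_solve m t t' ?_
      rcases Nat.even_or_odd m with he | ho
      · simp [he.neg_one_pow] at key ⊢; linarith
      · simp [ho.neg_one_pow] at key ⊢; linarith
    · refine Or.inl ⟨?_, by rw [hu, hu'], rfl⟩
      exact mul_right_cancel₀ (pow_ne_zero _ (by norm_num : (-1:ℤ) ≠ 0)) key
  · by_cases hv : v = 0
    · -- v = 0, u = ±1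
      have hu1 : u = 1 ∨ u = -1 := by
        have : u.natAbs = 1 := by simpa [hv, Int.gcd] using huv
        rcases Int.natAbs_eq u with h' | h' <;> omega
      have hx0ne : x 0 ≠ 0 := by
        have hjm : j = 0 := by
          by_contra hne
          apply hxj
          rw [h1 j hj, hv, zero_pow (by omega : j ≠ 0)]
          ring
        rwa [hjm] at hxj
      have hx01 : x 0 = t * u ^ m := by simpa using h1 0 h0
      have hx02 : x 0 = t' * u' ^ m := by simpa using h2 0 h0
      have ht' : t' ≠ 0 := by
        intro h0'; apply hx0ne; rw [hx02, h0']; ring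
      have hu'0 : u' ≠ 0 := by
        intro h0'; apply hx0ne; rw [hx02, h0', zero_pow (by omega : m ≠ 0)]; ring
      have hx11 : x 1 = 0 := by rw [h1 1 h1m, hv]; ring
      have hv' : v' = 0 := by
        have heq := h2 1 h1m
        rw [hx11] at heq
        rcases mul_eq_zero.mp heq.symm with h' | h'
        · rcases mul_eq_zero.mp h' with h'' | h''
          · exact absurd h'' ht'
          · simpa using h''
        · exact absurd (pow_eq_zero_iff (by omega : m - 1 ≠ 0) |>.mp h') hu'0
      have hu'1 : u' = 1 ∨ u' = -1 := by
        have : u'.natAbs = 1 := by simpa [hv', Int.gcd] using huv'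
        rcases Int.natAbs_eq u' with h' | h' <;> omega
      have key : t' * u' ^ m = t * u ^ m := by rw [← hx01, ← hx02]
      rcases hu1 with rfl | rfl <;> rcases hu'1 with rfl | rfl
      · exact Or.inl ⟨by simpa using key, rfl, by rw [hv, hv']⟩
      · refine Or.inr ⟨?_, by norm_num, by rw [hv, hv']; ring⟩
        exact sign_solve m t t' (by simpa using key)
      · refine Or.inr ⟨?_, by norm_num, by rw [hv, hv']; ring⟩
        refine sign_solve m t t' ?_
        rcases Nat.even_or_odd m with he | ho
        · simp [he.neg_one_pow] at key ⊢; linarith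
        · simp [ho.neg_one_pow] at key ⊢; linarith
      · refine Or.inl ⟨?_, rfl, by rw [hv, hv']⟩
        exact mul_right_cancel₀ (pow_ne_zero _ (by norm_num : (-1:ℤ) ≠ 0)) key
    · -- u ≠ 0, v ≠ 0
      have ht : t ≠ 0 := by
        intro h0'; apply hxj; rw [h1 j hj, h0']; ring
      have hx0 : x 0 = t * u ^ m := by simpa using h1 0 h0
      have hx0' : x 0 = t' * u' ^ m := by simpa using h2 0 h0
      have hxm : x m = t * v ^ m := by simpa using h1 m hmm
      have hxm' : x m = t' * v' ^ m := by simpa using h2 m hmm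
      have hx0ne : x 0 ≠ 0 := by
        rw [hx0]; exact mul_ne_zero ht (pow_ne_zero _ hu)
      have hxmne : x m ≠ 0 := by
        rw [hxm]; exact mul_ne_zero ht (pow_ne_zero _ hv)
      have ht' : t' ≠ 0 := by intro h0'; apply hx0ne; rw [hx0', h0']; ring
      have hu'0 : u' ≠ 0 := by
        intro h0'; apply hx0ne
        rw [hx0', h0', zero_pow (by omega : m ≠ 0)]; ring
      have hv'0 : v' ≠ 0 := by
        intro h0'; apply hxmne
        rw [hxm', h0', zero_pow (by omega : m ≠ 0)]; ring
      have hx1 : x 1 = t * v * u ^ (m - 1) := by simpa using h1 1 h1m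
      have hx1' : x 1 = t' * v' * u' ^ (m - 1) := by simpa using h2 1 h1m
      have hpu : u ^ m = u ^ (m - 1) * u := by
        rw [← pow_succ, (by omega : m - 1 + 1 = m)]
      have hpu' : u' ^ m = u' ^ (m - 1) * u' := by
        rw [← pow_succ, (by omega : m - 1 + 1 = m)]
      have e1 : x 0 * v = x 1 * u := by rw [hx0, hx1, hpu]; ring
      have e2 : x 0 * v' = x 1 * u' := by rw [hx0', hx1', hpu']; ring
      have cross : v * u' = u * v' := by
        refine mul_left_cancel₀ hx0ne ?_
        calc x 0 * (v * u') = (x 0 * v) * u' := by ring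
          _ = x 1 * u * u' := by rw [e1]
          _ = (x 0 * v') * u := by rw [e2]; ring
          _ = x 0 * (u * v') := by ring
      have hcop : IsCoprime u v := Int.isCoprime_iff_gcd_eq_one.mpr huv
      have hcop' : IsCoprime u' v' := Int.isCoprime_iff_gcd_eq_one.mpr huv'
      have d1 : u ∣ u' := hcop.dvd_of_dvd_mul_right ⟨v', by linear_combination cross⟩
      have d2 : u' ∣ u := hcop'.dvd_of_dvd_mul_right ⟨v, by linear_combination -cross⟩
      have hassoc : u' = u ∨ u' = -u := by
        have := Int.associated_iff.mp (associated_of_dvd_dvd d2 d1)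
        tauto
      rcases hassoc with h' | h'
      · left
        have hvv : v' = v := by
          refine (mul_left_cancel₀ hu ?_).symm
          linear_combination cross - v * h'
        refine ⟨?_, h', hvv⟩
        have heq : t * u ^ m = t' * u' ^ m := hx0.symm.trans hx0'
        rw [h'] at heq
        exact (mul_right_cancel₀ (pow_ne_zero _ hu) heq).symm
      · right
        have hvv : v' = -v := by
          refine (mul_left_cancel₀ hu ?_).symm
          linear_combination cross - v * h'
        refine ⟨?_, h', hvv⟩
        have key : t' * (-u) ^ m = t * u ^ m := by
          rw [← h']; rw [← hx0, ← hx0']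
        have h2' : t' * (-1:ℤ)^m * u ^ m = t * u ^ m := by
          rw [← key, neg_pow]; ring
        exact sign_solve m t t' (mul_right_cancel₀ (pow_ne_zero _ hu) h2')
end

section
/- Let p be an integer with p ≡ 1 (mod 4). If there exist integers u, t with u² − p t² = −4, then there exist integers x, y with x² − p y² = −1. -/
/-- If `p ≡ 1 (mod 4)` and `u² - p t² = -4` has an integer
solution, then `x² - p y² = -1` has an integer solution. -/
theorem stmt6 (p : ℤ) (hp : p % 4 = 1) (h : ∃ u t : ℤ, u ^ 2 - p * t ^ 2 = -4) :
    ∃ x y : ℤ, x ^ 2 - p * y ^ 2 = -1 := by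
  obtain ⟨u, t, h⟩ := h
  have hpodd : Odd p := Int.odd_iff.mpr (by omega)
  rcases Int.even_or_odd u with hu | hu <;> rcases Int.even_or_odd t with ht | ht
  · -- both even
    obtain ⟨m, hm⟩ := hu
    obtain ⟨n, hn⟩ := ht
    subst hm hn
    refine ⟨m, n, mul_left_cancel₀ (by norm_num : (4:ℤ) ≠ 0) ?_⟩
    linear_combination h
  · -- u even, t odd: impossible
    exfalso
    have h1 : Odd (p * t ^ 2) := hpodd.mul (ht.pow)
    have h2 : Even (u ^ 2) := by
      rw [sq]; exact hu.mul_right u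
    have h3 : Odd (u ^ 2 - p * t ^ 2) := h2.sub_odd h1
    rw [h] at h3
    rw [Int.odd_iff] at h3; omega
  · -- u odd, t even: impossible
    exfalso
    have h1 : Even (p * t ^ 2) := by
      have : Even (t ^ 2) := by rw [sq]; exact ht.mul_right t
      exact this.mul_left p
    have h2 : Odd (u ^ 2) := hu.pow
    have h3 : Odd (u ^ 2 - p * t ^ 2) := h2.sub_even h1
    rw [h] at h3
    rw [Int.odd_iff] at h3; omega
  · -- both odd
    obtain ⟨a, ha⟩ := hpodd.mul (ht.pow) -- p * t^2 = 2*a + 1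
    obtain ⟨b, hb⟩ := hu.pow            -- u^2 = 2*b + 1
    have hb' : b = a - 2 := by
      rw [hb, ha] at h; omega
    subst hb'
    refine ⟨u * a, t * (a - 1), ?_⟩
    linear_combination a ^ 2 * hb - (a - 1) ^ 2 * ha
end

section
/- Let p be a prime number with p = 2 or p ≡ 1 (mod 4). Then the negative Pell equation x² − p y² = −1 has a solution in integers x, y. -/
/-!
Legendre's argument. Let `(x, y)` be the fundamental solution of `x² - p y² = 1`. Reducing
mod 4 (using `p ≡ 1`) forces `y` even and `x` odd, so `x = 2u + 1`, `y = 2w` and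
`u (u + 1) = p w²`. The factors are coprime, so either `u = p c²`, `u + 1 = b²`, and then
`(b, c)` is a solution with `1 < b < x`, contradicting minimality; or `u = c²`, `u + 1 = p b²`,
which is `c² - p b² = -1`.
-/

theorem Nat.Coprime.exists_sq_of_mul_eq_sq {m n c : ℕ} (hmn : m.Coprime n) (h : m * n = c ^ 2) :
    ∃ a b, m = a ^ 2 ∧ n = b ^ 2 := by
  obtain ⟨a, ha⟩ := exists_eq_pow_of_mul_eq_pow (Nat.isUnit_iff.mpr hmn) h
  obtain ⟨b, hb⟩ := exists_eq_pow_of_mul_eq_pow (Nat.isUnit_iff.mpr hmn.symm) (c := c)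
    (by rw [mul_comm, h])
  exact ⟨a, b, ha, hb⟩

theorem Nat.Coprime.exists_sq_of_mul_eq_mul_sq_of_dvd_left {p m n w : ℕ} (hp : 0 < p)
    (hmn : m.Coprime n) (h : m * n = p * w ^ 2) (hpm : p ∣ m) :
    ∃ a b, m = p * a ^ 2 ∧ n = b ^ 2 := by
  obtain ⟨t, rfl⟩ := hpm
  have htn : t * n = w ^ 2 := Nat.eq_of_mul_eq_mul_left hp (by rw [← h, mul_assoc])
  obtain ⟨a, b, rfl, rfl⟩ := (Nat.Coprime.coprime_mul_left hmn).exists_sq_of_mul_eq_sq htn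
  exact ⟨a, b, rfl, rfl⟩

theorem Nat.Coprime.exists_sq_of_mul_eq_prime_mul_sq {p m n w : ℕ} (hp : p.Prime)
    (hmn : m.Coprime n) (h : m * n = p * w ^ 2) :
    (∃ a b, m = p * a ^ 2 ∧ n = b ^ 2) ∨ (∃ a b, m = a ^ 2 ∧ n = p * b ^ 2) := by
  rcases hp.dvd_mul.mp (Dvd.intro _ h.symm) with hpm | hpn
  · exact .inl (hmn.exists_sq_of_mul_eq_mul_sq_of_dvd_left hp.pos h hpm)
  · obtain ⟨b, a, hn, hm⟩ :=
      hmn.symm.exists_sq_of_mul_eq_mul_sq_of_dvd_left hp.pos (by rw [mul_comm, h]) hpn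
    exact .inr ⟨a, b, hm, hn⟩

theorem Int.even_of_sq_sub_mul_sq_eq_one {d x y : ℤ} (hd : d % 4 = 1)
    (h : x ^ 2 - d * y ^ 2 = 1) : Even y := by
  by_contra hy
  have hdy : d * y ^ 2 % 4 = 1 := by
    rw [Int.mul_emod, hd, Int.sq_mod_four_eq_one_of_odd (Int.not_even_iff_odd.mp hy)]
    rfl
  have hx : x ^ 2 % 4 = 0 ∨ x ^ 2 % 4 = 1 := by
    rcases Int.even_or_odd x with ⟨k, rfl⟩ | hx
    · exact .inl (by rw [show (k + k) ^ 2 = 4 * k ^ 2 by ring]; omega)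
    · exact .inr (Int.sq_mod_four_eq_one_of_odd hx)
  omega

theorem Int.odd_of_sq_sub_mul_sq_eq_one {d x y : ℤ} (hy : Even y) (h : x ^ 2 - d * y ^ 2 = 1) :
    Odd x := by
  have hx2 : Odd (x ^ 2) := by
    rw [show x ^ 2 = d * y ^ 2 + 1 by linarith]
    simp [parity_simps, hy]
  exact (Int.odd_pow' two_ne_zero).mp hx2

namespace Pell.IsFundamental

theorem exists_sq_sub_mul_sq_eq_neg_one {p : ℕ} (hp : p.Prime) (h4 : p % 4 = 1)
    {a : Solution₁ (p : ℤ)} (ha : IsFundamental a) : ∃ x y : ℤ, x ^ 2 - p * y ^ 2 = -1 := by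
  have hy := Int.even_of_sq_sub_mul_sq_eq_one (by omega) a.prop
  obtain ⟨u, hu⟩ := Int.odd_of_sq_sub_mul_sq_eq_one hy a.prop
  obtain ⟨w, hw⟩ := hy
  obtain ⟨hx1, -, hmin⟩ := ha
  lift u to ℕ using by omega
  have hu0 : 0 < u := by omega
  have hprod : u * (u + 1) = p * w.natAbs ^ 2 := by
    have := a.prop
    rw [hu, hw] at this
    zify
    rw [sq_abs]
    linarith
  have hcop : u.Coprime (u + 1) := Nat.coprime_self_add_right.mpr (Nat.coprime_one_right u)
  rcases hcop.exists_sq_of_mul_eq_prime_mul_sq hp hprod with ⟨c, b, hc, hb⟩ | ⟨c, b, hc, hb⟩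
  · exfalso
    have hsol : (b : ℤ) ^ 2 - p * (c : ℤ) ^ 2 = 1 := by
      zify at hc hb
      linarith
    have hb1 : 1 < b := by nlinarith
    have hxb : a.x ≤ b := by simpa using hmin (b := Solution₁.mk b c hsol) (by simpa using hb1)
    have hbb : b ≤ b ^ 2 := Nat.le_self_pow two_ne_zero b
    omega
  · exact ⟨c, b, by zify at hc hb; linarith⟩

end Pell.IsFundamental

/-- For a prime `p` with `p = 2` or `p ≡ 1 (mod 4)`, the negative
Pell equation `x² - p y² = -1` has an integer solution. -/
theorem stmt7 (p : ℕ) (hp : p.Prime) (h : p = 2 ∨ p % 4 = 1) :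
    ∃ x y : ℤ, x ^ 2 - (p : ℤ) * y ^ 2 = -1 := by
  rcases h with rfl | h4
  · exact ⟨1, 1, by norm_num⟩
  have hns : ¬IsSquare (p : ℤ) := by
    rw [Int.isSquare_natCast_iff]
    exact hp.prime.not_isSquare
  obtain ⟨a, ha⟩ := Pell.IsFundamental.exists_of_not_isSquare (by exact_mod_cast hp.pos) hns
  exact ha.exists_sq_sub_mul_sq_eq_neg_one hp h4
end

section
/- Let a be a squarefree integer with a ∉ {0,1}, let K = ℚ(√a), and assume the class number h_K of K equals 1. Let m be a nonzero integer such that for every rational prime p that is inert in K, the p-adic valuation ν_p(|m|) is even. Then there exists an element ξ of 𝒪_K whose norm N_{K/ℚ}(ξ) equals m or −m. -/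
open NumberField

set_option synthInstance.maxHeartbeats 400000

lemma absNorm_span_nat_prime (K : Type*) [Field K] [NumberField K]
    (hdeg : Module.finrank ℚ K = 2) (p : ℕ) :
    Ideal.absNorm (Ideal.span {(p : 𝓞 K)}) = p ^ 2 := by
  have b := Module.Free.chooseBasis ℤ (𝓞 K)
  rw [Ideal.absNorm_span_singleton,
    show ((p : 𝓞 K)) = algebraMap ℤ (𝓞 K) (p : ℤ) from by simp,
    Algebra.norm_algebraMap_of_basis b,
    ← Module.finrank_eq_card_chooseBasisIndex, RingOfIntegers.rank, hdeg]
  push_cast [Int.natAbs_pow]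
  rfl

lemma exists_ideal_norm_p (K : Type*) [Field K] [NumberField K]
    (hdeg : Module.finrank ℚ K = 2) (p : ℕ) (hp : p.Prime)
    (hnp : ¬ (Ideal.span {(p : 𝓞 K)}).IsPrime) :
    ∃ P : Ideal (𝓞 K), Ideal.absNorm P = p := by
  have hn := absNorm_span_nat_prime K hdeg p
  have hpne : (Ideal.span {(p : 𝓞 K)}) ≠ ⊤ := by
    intro h
    rw [h, Ideal.absNorm_top] at hn
    have := hp.one_lt
    nlinarith
  obtain ⟨P, hPmax, hle⟩ := Ideal.exists_le_maximal _ hpne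
  have hdvdP : Ideal.absNorm P ∣ p ^ 2 := hn ▸ Ideal.absNorm_dvd_absNorm_of_le hle
  obtain ⟨i, hi2, hPe⟩ := (Nat.dvd_prime_pow hp).mp hdvdP
  have hP1 : Ideal.absNorm P ≠ 1 := fun h =>
    hPmax.ne_top (Ideal.absNorm_eq_one_iff.mp h)
  interval_cases i
  · exact absurd (by simpa using hPe) hP1
  · exact ⟨P, by simpa using hPe⟩
  · exfalso
    obtain ⟨C, hC⟩ := Ideal.dvd_iff_le.mpr hle
    have hCnorm : Ideal.absNorm P * Ideal.absNorm C = p ^ 2 := by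
      rw [← _root_.map_mul Ideal.absNorm P C, ← hC, hn]
    rw [hPe] at hCnorm
    have hp2 : 0 < p ^ 2 := pow_pos hp.pos 2
    have hC1 : Ideal.absNorm C = 1 := by nlinarith
    rw [Ideal.absNorm_eq_one_iff.mp hC1, Ideal.mul_top] at hC
    exact hnp (hC ▸ hPmax.isPrime)

/-- Let `a ∉ {0,1}` be squarefree, `K = ℚ(√a)` with class number
`1`, and `m` a nonzero integer whose `p`-adic valuation `ν_p(|m|)` is even at every
rational prime `p` inert in `K`. Then some `ξ ∈ 𝒪_K` has norm `m` or `-m`. -/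
theorem stmt10 (a : ℤ) (ha : Squarefree a) (ha0 : a ≠ 0) (ha1 : a ≠ 1)
    (K : Type*) [Field K] [NumberField K]
    (hdeg : Module.finrank ℚ K = 2)
    (α : K) (hα : α ^ 2 = (a : K))
    (hclass : NumberField.classNumber K = 1)
    (m : ℤ) (hm : m ≠ 0)
    (hval : ∀ p : ℕ, p.Prime → (Ideal.span {(p : 𝓞 K)}).IsPrime →
      Even (padicValInt p m)) :
    ∃ ξ : 𝓞 K, Algebra.norm ℤ ξ = m ∨ Algebra.norm ℤ ξ = -m := by
  have hpir : IsPrincipalIdealRing (𝓞 K) := (classNumber_eq_one_iff).mp hclass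
  set n := m.natAbs with hn
  have hn0 : n ≠ 0 := Int.natAbs_ne_zero.mpr hm
  have key : ∀ p ∈ n.factorization.support,
      ∃ J : Ideal (𝓞 K), Ideal.absNorm J = p ^ n.factorization p := by
    intro p hps
    have hpp : p.Prime := Nat.prime_of_mem_primeFactors hps
    by_cases hin : (Ideal.span {(p : 𝓞 K)}).IsPrime
    · have heven : Even (n.factorization p) := by
        rw [Nat.factorization_def n hpp]
        exact hval p hpp hin
      obtain ⟨k, hk⟩ := heven
      refine ⟨(Ideal.span {(p : 𝓞 K)}) ^ k, ?_⟩
      rw [map_pow, absNorm_span_nat_prime K hdeg, ← pow_mul, hk, two_mul]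
    · obtain ⟨P, hP⟩ := exists_ideal_norm_p K hdeg p hpp hin
      exact ⟨P ^ n.factorization p, by rw [map_pow, hP]⟩
  choose J hJ using key
  set I : Ideal (𝓞 K) := ∏ p ∈ n.factorization.support.attach, J p.1 p.2 with hI
  have hInorm : Ideal.absNorm I = n := by
    rw [hI, map_prod]
    calc ∏ p ∈ n.factorization.support.attach, Ideal.absNorm (J p.1 p.2)
        = ∏ p ∈ n.factorization.support, p ^ n.factorization p := by
          rw [← Finset.prod_attach n.factorization.support
            (fun p => p ^ n.factorization p)]
          exact Finset.prod_congr rfl fun p _ => hJ p.1 p.2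
      _ = n := Nat.factorization_prod_pow_eq_self hn0
  obtain ⟨ξ, hξ⟩ := (hpir.principal I)
  refine ⟨ξ, ?_⟩
  have : (Algebra.norm ℤ ξ).natAbs = m.natAbs := by
    rw [← Ideal.absNorm_span_singleton, ← hn, ← hInorm, hξ]
  rcases Int.natAbs_eq_natAbs_iff.mp this with h | h
  · exact Or.inl h
  · exact Or.inr h
end

section
/- With M = ℤ^{r+2} and the involution σ as below, assume that all the d_i are even. Then the r elements e_i − (d_i/2) e_{r+1} (1 ≤ i ≤ r) form a ℤ-basis of the kernel of σ + id. -/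
/-!
Since `σ` fixes the `e_0`-coordinate and negates the `e_i`-coordinates modulo `e_{r+1}`, a vector
`x` lies in `ker (σ + LinearMap.id)` iff `x₀ = 0` and `2 x_{r+1} + Σ d_i x_i = 0`. When every `d_i` is even
the second condition reads `x_{r+1} = -Σ (d_i/2) x_i`, so the kernel is the graph of a linear form
on the free coordinates `x_1, …, x_r`, and the standard basis of `ℤ^r` is carried onto the vectors
`e_i - (d_i/2) e_{r+1}`.
-/

open LinearMap

section NegDotGraph

variable {R ι : Type*} [CommRing R] [Fintype ι]

def negDotGraph (c : ι → R) : (ι → R) →ₗ[R] R × (ι → R) × R where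
  toFun w := (0, w, -(c ⬝ᵥ w))
  map_add' v w := by simp [dotProduct_add, add_comm]
  map_smul' a w := by simp [dotProduct_smul]

theorem negDotGraph_apply (c w : ι → R) : negDotGraph c w = (0, w, -(c ⬝ᵥ w)) := rfl

theorem negDotGraph_injective (c : ι → R) : Function.Injective (negDotGraph c) :=
  fun _ _ h => congrArg (fun x => x.2.1) h

theorem mem_range_negDotGraph_iff (c : ι → R) (x : R × (ι → R) × R) :
    x ∈ range (negDotGraph c) ↔ x.1 = 0 ∧ x.2.2 = -(c ⬝ᵥ x.2.1) := by
  constructor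
  · rintro ⟨w, rfl⟩
    exact ⟨rfl, rfl⟩
  · rintro ⟨h₁, h₃⟩
    exact ⟨x.2.1, Prod.ext h₁.symm (Prod.ext rfl h₃.symm)⟩

theorem negDotGraph_single [DecidableEq ι] (c : ι → R) (i : ι) :
    negDotGraph c (Pi.single i 1) = (0, Pi.single i 1, -c i) := by
  simp [negDotGraph_apply, dotProduct_single]

end NegDotGraph

theorem dotProduct_eq_two_mul_of_even {ι : Type*} [Fintype ι] {d : ι → ℤ} (hd : ∀ i, Even (d i))
    (w : ι → ℤ) : d ⬝ᵥ w = 2 * ((fun i => d i / 2) ⬝ᵥ w) := by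
  simp only [dotProduct, Finset.mul_sum, ← mul_assoc, Int.two_mul_ediv_two_of_even (hd _)]

theorem mem_ker_add_id_iff {r : ℕ} {d : Fin r → ℤ} (hd : ∀ i, Even (d i))
    {σ : (ℤ × (Fin r → ℤ) × ℤ) →ₗ[ℤ] (ℤ × (Fin r → ℤ) × ℤ)}
    (hσ : ∀ x : ℤ × (Fin r → ℤ) × ℤ,
      σ x = (x.1, fun i => x.1 - x.2.1 i, x.2.2 + d ⬝ᵥ x.2.1 - ((∑ i, d i) / 2) * x.1))
    (x : ℤ × (Fin r → ℤ) × ℤ) :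
    x ∈ ker (σ + LinearMap.id) ↔ x.1 = 0 ∧ x.2.2 = -((fun i => d i / 2) ⬝ᵥ x.2.1) := by
  rw [mem_ker, LinearMap.add_apply, LinearMap.id_apply, hσ, dotProduct_eq_two_mul_of_even hd]
  simp only [Prod.ext_iff, Prod.fst_add, Prod.snd_add, Prod.fst_zero, Prod.snd_zero,
    funext_iff, Pi.add_apply, Pi.zero_apply]
  constructor
  · rintro ⟨h₁, -, h₃⟩
    have hx₁ : x.1 = 0 := by omega
    refine ⟨hx₁, ?_⟩
    rw [hx₁] at h₃
    linarith
  · rintro ⟨hx₁, hx₃⟩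
    refine ⟨by omega, fun i => by omega, ?_⟩
    rw [hx₁, hx₃]
    ring

theorem stmt14_general (r : ℕ) (d : Fin r → ℤ)
    (hd2 : ∀ i, Even (d i))
    (σ : (ℤ × (Fin r → ℤ) × ℤ) →ₗ[ℤ] (ℤ × (Fin r → ℤ) × ℤ))
    (hσ : ∀ x : ℤ × (Fin r → ℤ) × ℤ,
      σ x = (x.1, fun i => x.1 - x.2.1 i,
             x.2.2 + (∑ i, d i * x.2.1 i) - ((∑ i, d i) / 2) * x.1)) :
    ∃ b : Module.Basis (Fin r) ℤ (LinearMap.ker (σ + LinearMap.id)),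
      ∀ i : Fin r,
        (b i : ℤ × (Fin r → ℤ) × ℤ) = (0, Pi.single i 1, -(d i / 2)) := by
  set c : Fin r → ℤ := fun i => d i / 2
  have hrange : range (negDotGraph c) = ker (σ + LinearMap.id) := by
    ext x
    rw [mem_range_negDotGraph_iff, mem_ker_add_id_iff hd2 hσ]
  let e := (LinearEquiv.ofInjective _ (negDotGraph_injective c)).trans
    (LinearEquiv.ofEq _ _ hrange)
  refine ⟨(Pi.basisFun ℤ (Fin r)).map e, fun i => ?_⟩
  simpa [e] using negDotGraph_single c i

/-- With `M = ℤ × (Fin r → ℤ) × ℤ` and the involution `σ` as in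
Statement 13, if all the `d_i` are even then the `r` elements
`e_i - (d_i/2) e_{r+1} = (0, Pi.single i 1, -(d_i/2))` (`1 ≤ i ≤ r`) form a
ℤ-basis of `ker(σ + id)`. -/
theorem stmt14 (r : ℕ) (hr : 1 ≤ r) (d : Fin r → ℤ) (hd : ∀ i, 0 < d i)
    (hd2 : ∀ i, Even (d i))
    (σ : (ℤ × (Fin r → ℤ) × ℤ) →ₗ[ℤ] (ℤ × (Fin r → ℤ) × ℤ))
    (hσ : ∀ x : ℤ × (Fin r → ℤ) × ℤ,
      σ x = (x.1, fun i => x.1 - x.2.1 i,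
             x.2.2 + (∑ i, d i * x.2.1 i) - ((∑ i, d i) / 2) * x.1)) :
    ∃ b : Module.Basis (Fin r) ℤ (LinearMap.ker (σ + LinearMap.id)),
      ∀ i : Fin r,
        (b i : ℤ × (Fin r → ℤ) × ℤ) = (0, Pi.single i 1, -(d i / 2)) :=
  stmt14_general r d hd2 σ hσ
end

section
/- With M = ℤ^{r+2} and the involution σ as below, assume that all the d_i are even. Then the quotient group ker(σ + id)/im(id − σ) is isomorphic to (ℤ/2ℤ)^{r−1}. -/
private def psi15 (r : ℕ) (hr : 1 ≤ r) :
    (ℤ × (Fin r → ℤ) × ℤ) →ₗ[ℤ] (Fin (r-1) → ZMod 2) where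
  toFun x j := ((x.2.1 ⟨j.1 + 1, by have := j.2; omega⟩ - x.2.1 ⟨0, hr⟩ : ℤ) : ZMod 2)
  map_add' x y := by funext j; simp; ring
  map_smul' c x := by funext j; simp [smul_eq_mul]; ring


/-- With `M = ℤ × (Fin r → ℤ) × ℤ` and the involution `σ` as in
Statement 13, if all the `d_i` are even then
`ker(σ + id)/im(id - σ) ≅ (ℤ/2ℤ)^{r-1}`. -/
theorem stmt15 (r : ℕ) (hr : 1 ≤ r) (d : Fin r → ℤ) (hd : ∀ i, 0 < d i)
    (hd2 : ∀ i, Even (d i))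
    (σ : (ℤ × (Fin r → ℤ) × ℤ) →ₗ[ℤ] (ℤ × (Fin r → ℤ) × ℤ))
    (hσ : ∀ x : ℤ × (Fin r → ℤ) × ℤ,
      σ x = (x.1, fun i => x.1 - x.2.1 i,
             x.2.2 + (∑ i, d i * x.2.1 i) - ((∑ i, d i) / 2) * x.1)) :
    Nonempty
      ((LinearMap.ker (σ + LinearMap.id) ⧸
          Submodule.comap (LinearMap.ker (σ + LinearMap.id)).subtype
            (LinearMap.range (LinearMap.id - σ))) ≃+
        (Fin (r - 1) → ZMod 2)) := by
  have hD : (2:ℤ) ∣ ∑ i, d i := Finset.dvd_sum fun i _ => (hd2 i).two_dvd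
  set K := LinearMap.ker (σ + LinearMap.id) with hK
  set φ : K →ₗ[ℤ] (Fin (r-1) → ZMod 2) := (psi15 r hr) ∘ₗ K.subtype with hφ
  -- facts about kernel membership
  have hker : ∀ x : ℤ × (Fin r → ℤ) × ℤ, x ∈ K ↔
      (x.1 = 0 ∧ 2 * x.2.2 + (∑ i, d i * x.2.1 i) = 0) := by
    intro x
    rw [hK, LinearMap.mem_ker, LinearMap.add_apply, LinearMap.id_apply, hσ, Prod.ext_iff,
      Prod.ext_iff]
    constructor
    · rintro ⟨h1, _, h3⟩
      simp only [Prod.fst_add, Prod.snd_add, Prod.fst_zero, Prod.snd_zero] at h1 h3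
      constructor
      · omega
      · have hx1 : x.1 = 0 := by omega
        rw [hx1] at h3
        simp at h3
        linarith
    · rintro ⟨h1, h3⟩
      refine ⟨by simp [h1], by funext i; simp [h1], ?_⟩
      simp [h1]
      linarith
  have hNeq : Submodule.comap K.subtype (LinearMap.range (LinearMap.id - σ)) =
      LinearMap.ker φ := by
    ext x
    rw [Submodule.mem_comap, LinearMap.mem_range, LinearMap.mem_ker]
    constructor
    · rintro ⟨y, hy⟩
      rw [LinearMap.sub_apply, LinearMap.id_apply, hσ] at hy
      have hb : ∀ i, (x : ℤ × (Fin r → ℤ) × ℤ).2.1 i = 2 * y.2.1 i - y.1 := by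
        intro i
        have := congrArg (fun z => z.2.1 i) hy
        simp at this
        linarith
      funext j
      show ((_ : ℤ) : ZMod 2) = 0
      simp only [Submodule.subtype_apply]
      rw [hb, hb]
      exact (ZMod.intCast_zmod_eq_zero_iff_dvd _ 2).mpr (by omega)
    · intro hx
      have hxK := (hker _).mp x.2
      -- divisibility of b_i + b_0
      have hdvd : ∀ i : Fin r, (2:ℤ) ∣ ((x : ℤ × (Fin r → ℤ) × ℤ).2.1 i
          + (x : ℤ × (Fin r → ℤ) × ℤ).2.1 ⟨0, hr⟩) := by
        intro i
        rcases Nat.eq_zero_or_pos i.1 with h0 | h0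
        · have : i = ⟨0, hr⟩ := Fin.ext h0
          rw [this]
          exact ⟨_, (two_mul _).symm⟩
        · have hj : i.1 - 1 < r - 1 := by have := i.2; omega
          have := congrFun hx ⟨i.1 - 1, hj⟩
          simp only [Pi.zero_apply] at this
          have h2 : (2:ℤ) ∣ ((x : ℤ × (Fin r → ℤ) × ℤ).2.1 ⟨(i.1-1)+1, by omega⟩
              - (x : ℤ × (Fin r → ℤ) × ℤ).2.1 ⟨0, hr⟩) :=
            (ZMod.intCast_zmod_eq_zero_iff_dvd _ 2).mp this
          have hi : (⟨(i.1-1)+1, by omega⟩ : Fin r) = i := Fin.ext (by show i.1 - 1 + 1 = i.1; omega)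
          rw [hi] at h2
          obtain ⟨k, hk⟩ := h2
          exact ⟨k + (x : ℤ × (Fin r → ℤ) × ℤ).2.1 ⟨0, hr⟩, by linarith⟩
      set a := (x : ℤ × (Fin r → ℤ) × ℤ).2.1 ⟨0, hr⟩ with ha
      set b' : Fin r → ℤ := fun i => ((x : ℤ × (Fin r → ℤ) × ℤ).2.1 i + a) / 2 with hb'
      have h2b : ∀ i, 2 * b' i = (x : ℤ × (Fin r → ℤ) × ℤ).2.1 i + a := fun i =>
        Int.mul_ediv_cancel' (hdvd i)
      refine ⟨(a, b', 0), ?_⟩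
      rw [LinearMap.sub_apply, LinearMap.id_apply, hσ, Submodule.subtype_apply]
      refine Prod.ext ?_ (Prod.ext ?_ ?_)
      · simp [hxK.1]
      · funext i
        show b' i - (a - b' i) = _
        have := h2b i
        linarith
      · show 0 - (0 + (∑ i, d i * b' i) - ((∑ i, d i) / 2) * a) = _
        have hsum : 2 * (∑ i, d i * b' i) = (∑ i, d i * (x : ℤ × (Fin r → ℤ) × ℤ).2.1 i)
            + (∑ i, d i) * a := by
          rw [Finset.mul_sum]
          have : ∀ i ∈ Finset.univ, 2 * (d i * b' i)
              = d i * (x : ℤ × (Fin r → ℤ) × ℤ).2.1 i + d i * a := by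
            intro i _
            have := h2b i
            calc 2 * (d i * b' i) = d i * (2 * b' i) := by ring
            _ = d i * ((x : ℤ × (Fin r → ℤ) × ℤ).2.1 i + a) := by rw [this]
            _ = _ := by ring
          rw [Finset.sum_congr rfl this, Finset.sum_add_distrib, ← Finset.sum_mul]
        have hDa : 2 * (((∑ i, d i) / 2) * a) = (∑ i, d i) * a := by
          rw [← mul_assoc, Int.mul_ediv_cancel' hD]
        have h3 := hxK.2
        linarith
  have hsurj : Function.Surjective φ := by
    intro f
    set b : Fin r → ℤ := fun i =>
      if h : i.1 = 0 then 0 else ((f ⟨i.1 - 1, by have := i.2; omega⟩).val : ℤ) with hb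
    have hdvd2 : (2:ℤ) ∣ ∑ i, d i * b i :=
      Finset.dvd_sum fun i _ => Dvd.dvd.mul_right (hd2 i).two_dvd _
    set c : ℤ := -((∑ i, d i * b i) / 2) with hc
    have hmem : ((0 : ℤ), b, c) ∈ K := by
      rw [hker]
      refine ⟨rfl, ?_⟩
      show 2 * c + _ = 0
      rw [hc]
      have := Int.mul_ediv_cancel' hdvd2
      linarith
    refine ⟨⟨((0 : ℤ), b, c), hmem⟩, ?_⟩
    funext j
    show ((b ⟨j.1 + 1, _⟩ - b ⟨0, hr⟩ : ℤ) : ZMod 2) = f j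
    have h1 : b ⟨0, hr⟩ = 0 := by simp [hb]
    have h2 : b ⟨j.1 + 1, by have := j.2; omega⟩ = ((f j).val : ℤ) := by
      simp only [hb]
      rw [dif_neg (Nat.succ_ne_zero j.1 : ¬ ((⟨j.1 + 1, by have := j.2; omega⟩ : Fin r).1 = 0))]
      exact congrArg (fun t => ((f t).val : ℤ)) (Fin.ext (by show j.1 + 1 - 1 = j.1; omega))
    rw [h1, h2, sub_zero]
    push_cast
    simp [ZMod.natCast_val, ZMod.cast_id]
  exact ⟨((Submodule.quotEquivOfEq _ _ hNeq).trans
    (φ.quotKerEquivOfSurjective hsurj)).toAddEquiv⟩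
end

section
/- With M = ℤ^{r+2} and the involution σ as below, assume that at least one d_i is odd (so that, since n is even, r ≥ 2). Then the quotient group ker(σ + id)/im(id − σ) is isomorphic to (ℤ/2ℤ)^{r−2}. -/
/-- With `M = ℤ × (Fin r → ℤ) × ℤ` and the involution `σ` as in
Statement 13, if some `d_i` is odd (so `r ≥ 2` since `∑ d_i` is even) then
`ker(σ + id)/im(id - σ) ≅ (ℤ/2ℤ)^{r-2}`. -/
theorem stmt16 (r : ℕ) (hr : 1 ≤ r) (d : Fin r → ℤ) (hd : ∀ i, 0 < d i)
    (hn : Even (∑ i, d i)) (hd2 : ∃ i, Odd (d i))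
    (σ : (ℤ × (Fin r → ℤ) × ℤ) →ₗ[ℤ] (ℤ × (Fin r → ℤ) × ℤ))
    (hσ : ∀ x : ℤ × (Fin r → ℤ) × ℤ,
      σ x = (x.1, fun i => x.1 - x.2.1 i,
             x.2.2 + (∑ i, d i * x.2.1 i) - ((∑ i, d i) / 2) * x.1)) :
    Nonempty
      ((LinearMap.ker (σ + LinearMap.id) ⧸
          Submodule.comap (LinearMap.ker (σ + LinearMap.id)).subtype
            (LinearMap.range (LinearMap.id - σ))) ≃+
        (Fin (r - 2) → ZMod 2)) := by
  classical
  obtain ⟨j, hj⟩ := hd2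
  -- find a second index with odd degree
  have hk' : ∃ k, k ≠ j ∧ Odd (d k) := by
    by_contra h
    push_neg at h
    have heven : Even (∑ i ∈ Finset.univ.erase j, d i) := by
      refine Finset.even_sum _ fun i hi => ?_
      rcases Finset.mem_erase.mp hi with ⟨hij, _⟩
      exact Int.not_odd_iff_even.mp (h i hij)
    have hsplit : d j + ∑ i ∈ Finset.univ.erase j, d i = ∑ i, d i :=
      Finset.add_sum_erase _ d (Finset.mem_univ j)
    obtain ⟨a, ha⟩ := hj
    obtain ⟨b, hb⟩ := heven
    obtain ⟨c, hc⟩ := hn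
    omega
  obtain ⟨k, hkj, hk⟩ := hk'
  have hjk : j ≠ k := fun h => hkj h.symm
  obtain ⟨m, hm⟩ := hn
  have hm2 : (∑ i, d i) / 2 = m := by omega
  -- the complement of {j,k}
  have hcard : Fintype.card {i : Fin r // i ≠ j ∧ i ≠ k} = r - 2 := by
    rw [Fintype.card_subtype]
    have : (Finset.univ.filter fun i : Fin r => i ≠ j ∧ i ≠ k)
        = ({j, k} : Finset (Fin r))ᶜ := by
      ext i
      simp [not_or]
    rw [this, Finset.card_compl, Finset.card_pair hjk, Fintype.card_fin]
  let e : Fin (r - 2) ≃ {i : Fin r // i ≠ j ∧ i ≠ k} :=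
    (Fintype.equivFinOfCardEq hcard).symm
  -- the comparison map
  let cast2 : ℤ →ₗ[ℤ] ZMod 2 := (Int.castAddHom (ZMod 2)).toIntLinearMap
  let π : (ℤ × (Fin r → ℤ) × ℤ) →ₗ[ℤ] (Fin (r - 2) → ℤ) :=
    { toFun := fun x mm => x.2.1 (e mm).1 - x.2.1 k
      map_add' := by
        intro x y
        funext mm
        simp only [Prod.snd_add, Prod.fst_add, Pi.add_apply]
        ring
      map_smul' := by
        intro c x
        funext mm
        simp only [Prod.smul_snd, Prod.smul_fst, Pi.smul_apply, smul_eq_mul,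
          RingHom.id_apply]
        ring }
  let f : (ℤ × (Fin r → ℤ) × ℤ) →ₗ[ℤ] (Fin (r - 2) → ZMod 2) :=
    (cast2.compLeft (Fin (r - 2))) ∘ₗ π
  have hfval : ∀ x : ℤ × (Fin r → ℤ) × ℤ, ∀ mm,
      f x mm = ((x.2.1 (e mm).1 - x.2.1 k : ℤ) : ZMod 2) :=
    fun _ _ => rfl
  -- membership in the kernel
  have memA : ∀ x : ℤ × (Fin r → ℤ) × ℤ, x ∈ LinearMap.ker (σ + LinearMap.id) ↔
      x.1 = 0 ∧ 2 * x.2.2 + ∑ i, d i * x.2.1 i = 0 := by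
    intro x
    obtain ⟨x0, xv, xt⟩ := x
    rw [LinearMap.mem_ker, LinearMap.add_apply, LinearMap.id_apply, hσ]
    simp only [Prod.mk_add_mk, Prod.mk_eq_zero, Pi.add_apply, funext_iff,
      Pi.zero_apply, hm2]
    constructor
    · rintro ⟨h1, _, h3⟩
      have hx0 : x0 = 0 := by omega
      subst hx0
      simp only [mul_zero, sub_zero] at h3
      exact ⟨rfl, by omega⟩
    · rintro ⟨h1, h3⟩
      subst h1
      refine ⟨rfl, fun i => by ring, ?_⟩
      simp only [mul_zero, sub_zero]
      omega
  -- membership in the image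
  have memR : ∀ x : ℤ × (Fin r → ℤ) × ℤ,
      x ∈ LinearMap.range (LinearMap.id - σ) ↔
      ∃ y0 : ℤ, ∃ yv : Fin r → ℤ,
        x = (0, fun i => 2 * yv i - y0, m * y0 - ∑ i, d i * yv i) := by
    intro x
    constructor
    · rintro ⟨y, rfl⟩
      refine ⟨y.1, y.2.1, ?_⟩
      rw [LinearMap.sub_apply, LinearMap.id_apply, hσ]
      obtain ⟨y0, yv, yt⟩ := y
      simp only [Prod.mk_sub_mk, hm2]
      refine Prod.ext (by ring) (Prod.ext (funext fun i => ?_) ?_)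
      · show yv i - (y0 - yv i) = 2 * yv i - y0
        ring
      · show yt - (yt + (∑ i, d i * yv i) - m * y0) = m * y0 - ∑ i, d i * yv i
        ring
    · rintro ⟨y0, yv, rfl⟩
      refine ⟨(y0, yv, 0), ?_⟩
      rw [LinearMap.sub_apply, LinearMap.id_apply, hσ]
      simp only [Prod.mk_sub_mk, hm2]
      refine Prod.ext (by ring) (Prod.ext (funext fun i => ?_) ?_)
      · show yv i - (y0 - yv i) = 2 * yv i - y0
        ring
      · show (0 : ℤ) - (0 + (∑ i, d i * yv i) - m * y0) = m * y0 - ∑ i, d i * yv i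
        ring
  have h2z : (2 : ZMod 2) = 0 := rfl
  have hdj1 : ((d j : ℤ) : ZMod 2) = 1 := by
    obtain ⟨a, ha⟩ := hj
    rw [ha]
    push_cast
    rw [h2z]
    ring
  let f' := f ∘ₗ (LinearMap.ker (σ + LinearMap.id)).subtype
  -- kernel of f' equals the image submodule
  have hker : Submodule.comap (LinearMap.ker (σ + LinearMap.id)).subtype
      (LinearMap.range (LinearMap.id - σ)) = LinearMap.ker f' := by
    ext a
    obtain ⟨⟨x0, xv, xt⟩, ha⟩ := a
    have haA := (memA _).mp ha
    obtain ⟨hx0, hrel⟩ := haA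
    simp only at hx0 hrel
    simp only [Submodule.mem_comap, Submodule.coe_subtype, LinearMap.mem_ker]
    rw [memR]
    constructor
    · rintro ⟨y0, yv, hy⟩
      have hxv : xv = fun i => 2 * yv i - y0 := congrArg (fun z => z.2.1) hy
      funext mm
      show f (x0, xv, xt) mm = 0
      rw [hfval, hxv]
      push_cast
      rw [h2z]
      ring
    · intro h0
      have h0' : ∀ mm : Fin (r - 2),
          ((xv (e mm).1 : ℤ) : ZMod 2) = ((xv k : ℤ) : ZMod 2) := by
        intro mm
        have h : f (x0, xv, xt) mm = 0 := congrFun h0 mm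
        rw [hfval] at h
        push_cast at h
        exact sub_eq_zero.mp h
      -- parity facts
      have hpar' : ∀ i, i ≠ j → ((xv i : ℤ) : ZMod 2) = ((xv k : ℤ) : ZMod 2) := by
        intro i hij
        by_cases hik : i = k
        · rw [hik]
        · have h := h0' (e.symm ⟨i, hij, hik⟩)
          rwa [Equiv.apply_symm_apply] at h
      have hsum0 : (∑ i, ((d i : ℤ) : ZMod 2) * ((xv i : ℤ) : ZMod 2)) = 0 := by
        have h := congrArg (fun z : ℤ => ((z : ℤ) : ZMod 2)) hrel
        push_cast at h
        rw [h2z] at h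
        simpa using h
      have hsplit : (∑ i, ((d i : ℤ) : ZMod 2) * ((xv i : ℤ) : ZMod 2))
          = ((d j : ℤ) : ZMod 2) * ((xv j : ℤ) : ZMod 2)
            + ∑ i ∈ Finset.univ.erase j, ((d i : ℤ) : ZMod 2) * ((xv i : ℤ) : ZMod 2) :=
        (Finset.add_sum_erase Finset.univ
          (fun i => ((d i : ℤ) : ZMod 2) * ((xv i : ℤ) : ZMod 2))
          (Finset.mem_univ j)).symm
      have hrest : (∑ i ∈ Finset.univ.erase j, ((d i : ℤ) : ZMod 2) * ((xv i : ℤ) : ZMod 2))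
          = (∑ i ∈ Finset.univ.erase j, ((d i : ℤ) : ZMod 2)) * ((xv k : ℤ) : ZMod 2) := by
        rw [Finset.sum_mul]
        refine Finset.sum_congr rfl fun i hi => ?_
        rw [hpar' i (Finset.mem_erase.mp hi).1]
      have hrest2 : (∑ i ∈ Finset.univ.erase j, ((d i : ℤ) : ZMod 2)) = 1 := by
        have h1 : ((d j : ℤ) : ZMod 2) + ∑ i ∈ Finset.univ.erase j, ((d i : ℤ) : ZMod 2)
            = ∑ i, ((d i : ℤ) : ZMod 2) :=
          Finset.add_sum_erase Finset.univ (fun i => ((d i : ℤ) : ZMod 2))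
            (Finset.mem_univ j)
        have h2 : (∑ i, ((d i : ℤ) : ZMod 2)) = 0 := by
          have h3 : ((∑ i, d i : ℤ) : ZMod 2) = ((m + m : ℤ) : ZMod 2) := by rw [hm]
          push_cast at h3
          rw [h3]
          linear_combination (m : ZMod 2) * h2z
        rw [hdj1] at h1
        have h4 := h1.trans h2
        linear_combination h4 - h2z
      have hparj : ((xv j : ℤ) : ZMod 2) = ((xv k : ℤ) : ZMod 2) := by
        rw [hsplit, hrest, hrest2, hdj1, one_mul, one_mul] at hsum0
        have hself : ((xv k : ℤ) : ZMod 2) + ((xv k : ℤ) : ZMod 2) = 0 := by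
          have h5 : ((2 * xv k : ℤ) : ZMod 2) = 0 := by
            push_cast
            rw [h2z]
            ring
          push_cast at h5
          linear_combination h5
        linear_combination hsum0 - hself
      have hpar : ∀ i, xv i % 2 = xv k % 2 := by
        intro i
        have hi : ((xv i : ℤ) : ZMod 2) = ((xv k : ℤ) : ZMod 2) := by
          by_cases hij : i = j
          · rw [hij]; exact hparj
          · exact hpar' i hij
        have := (ZMod.intCast_eq_intCast_iff' _ _ _).mp hi
        simpa [Int.ModEq] using this
      -- construct the preimage
      refine ⟨xv k, fun i => (xv i + xv k) / 2, ?_⟩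
      have hmid : ∀ i, 2 * ((xv i + xv k) / 2) - xv k = xv i := by
        intro i
        have := hpar i
        omega
      have hsum2 : 2 * (∑ i, d i * ((xv i + xv k) / 2))
          = (∑ i, d i * xv i) + (∑ i, d i) * xv k := by
        rw [Finset.mul_sum, Finset.sum_mul, ← Finset.sum_add_distrib]
        refine Finset.sum_congr rfl fun i _ => ?_
        have h2d : 2 * ((xv i + xv k) / 2) = xv i + xv k := by
          have := hpar i; omega
        calc 2 * (d i * ((xv i + xv k) / 2)) = d i * (2 * ((xv i + xv k) / 2)) := by ring
          _ = d i * (xv i + xv k) := by rw [h2d]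
          _ = d i * xv i + d i * xv k := by ring
      refine Prod.ext hx0 (Prod.ext (funext fun i => (hmid i).symm) ?_)
      show xt = m * xv k - ∑ i, d i * ((xv i + xv k) / 2)
      rw [hm] at hsum2
      linarith [hsum2, hrel]
  -- surjectivity of f'
  have hsurj : Function.Surjective f' := by
    intro w
    set x0 : Fin r → ℤ :=
      fun i => if h : i ≠ j ∧ i ≠ k then ((w (e.symm ⟨i, h⟩)).val : ℤ) else 0 with hx0def
    set R : ℤ := ∑ i, d i * x0 i with hRdef
    set c : ℤ := if Even R then 0 else 1 with hcdef
    set xv : Fin r → ℤ := fun i => x0 i + if i = j then c else 0 with hxvdef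
    have hS : ∑ i, d i * xv i = R + d j * c := by
      have h1 : ∀ i, d i * xv i = d i * x0 i + (if i = j then d i * c else 0) := by
        intro i
        by_cases hij : i = j
        · simp only [hxvdef, if_pos hij]
          ring
        · simp only [hxvdef, if_neg hij]
          ring
      rw [Finset.sum_congr rfl fun i _ => h1 i, Finset.sum_add_distrib,
        Finset.sum_ite_eq' Finset.univ j fun i => d i * c]
      simp [hRdef]
    have hSeven : Even (∑ i, d i * xv i) := by
      rw [hS]
      by_cases hR : Even R
      · rw [hcdef, if_pos hR]
        simpa using hR
      · rw [hcdef, if_neg hR]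
        obtain ⟨a, ha⟩ := hj
        obtain ⟨b, hb⟩ := Int.not_even_iff_odd.mp hR
        exact ⟨a + b + 1, by omega⟩
    obtain ⟨u, hu⟩ := hSeven
    have haA : ((0 : ℤ), xv, -u) ∈ LinearMap.ker (σ + LinearMap.id) := by
      rw [memA]
      refine ⟨rfl, ?_⟩
      show 2 * (-u) + ∑ i, d i * xv i = 0
      omega
    refine ⟨⟨((0 : ℤ), xv, -u), haA⟩, ?_⟩
    funext mm
    show f ((0 : ℤ), xv, -u) mm = w mm
    rw [hfval]
    show ((xv (e mm).1 - xv k : ℤ) : ZMod 2) = w mm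
    have hxk : xv k = 0 := by
      simp [hxvdef, hx0def, hkj]
    have hprop := (e mm).2
    have hx0e : x0 (e mm).1 = ((w (e.symm ⟨(e mm).1, hprop⟩)).val : ℤ) := by
      simp only [hx0def]
      rw [dif_pos hprop]
    have hsub : (⟨(e mm).1, hprop⟩ : {i : Fin r // i ≠ j ∧ i ≠ k}) = e mm :=
      Subtype.ext rfl
    rw [hsub, Equiv.symm_apply_apply] at hx0e
    have hxe : xv (e mm).1 = ((w mm).val : ℤ) := by
      simp only [hxvdef, if_neg hprop.1, add_zero]
      exact hx0e
    rw [hxe, hxk]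
    push_cast
    simp only [sub_zero]
    exact ZMod.natCast_rightInverse (w mm)
  refine ⟨?_⟩
  exact ((Submodule.quotEquivOfEq _ _ hker).trans
    (f'.quotKerEquivOfSurjective hsurj)).toAddEquiv
end
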